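/- arXiv:2605.06019 — 7 statements merged into one kernel-verified Lean document; each statement's English description precedes it below -/
import Mathlib

section
/- For positive semidefinite sesquilinear forms realized by commuting bounded positive operators A, B on a Hilbert space with A + B = I, the 2x2 block form [[α, γ],[γ, β]] is positive if and only if |γ(x,y)|² ≤ α(x,x)·β(y,y) for all vectors x, y. Concretely: for positive sesquilinear forms α, β, γ on a complex vector space V, the block sesquilinear form Γ((x₁,x₂),(y₁,y₂)) = α(x₁,y₁) + γ(x₂,y₁) + γ(x₁,y₂) + β(x₂,y₂) is positive semidefinite on V × V if and only if |γ(x,y)|² ≤ α(x,x)β(y,y) for all x,y ∈ V. -/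
/-!
If the block form `Γ` is positive, it is a positive semidefinite Hermitian form on `V × V`, and
its Cauchy–Schwarz inequality at `(x, 0)` and `(0, y)` is exactly `|γ(x,y)|² ≤ α(x,x) β(y,y)`.
Conversely, `γ` is Hermitian because its diagonal is real, so
`Γ((x₁,x₂),(x₁,x₂)) = α(x₁,x₁) + 2 Re γ(x₁,x₂) + β(x₂,x₂)`, and the domination bound gives
`2 |γ(x₁,x₂)| ≤ 2 √(α(x₁,x₁) β(x₂,x₂)) ≤ α(x₁,x₁) + β(x₂,x₂)`.
-/

open scoped ComplexOrder
open ComplexConjugate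

namespace LinearMap

variable {E : Type*} [AddCommGroup E] [Module ℂ E]

theorem apply_swap_eq_conj_of_im_eq_zero (B : E →ₗ[ℂ] E →ₗ⋆[ℂ] ℂ)
    (hB : ∀ x, (B x x).im = 0) (x y : E) : B y x = conj (B x y) := by
  have h₁ := hB (x + y)
  have h₂ := hB (x + Complex.I • y)
  simp only [map_add, map_smul, LinearMap.map_smulₛₗ, add_apply, smul_apply, smul_eq_mul,
    Complex.conj_I, Complex.add_im, Complex.add_re, Complex.mul_im, Complex.mul_re, Complex.neg_im,
    Complex.I_re, Complex.I_im, neg_mul, hB x, hB y] at h₁ h₂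
  apply Complex.ext <;> simp only [Complex.conj_re, Complex.conj_im] <;> linarith

theorem apply_swap_eq_conj_of_nonneg (B : E →ₗ[ℂ] E →ₗ⋆[ℂ] ℂ) (hB : ∀ x, 0 ≤ B x x) (x y : E) :
    B y x = conj (B x y) :=
  B.apply_swap_eq_conj_of_im_eq_zero (fun z ↦ (Complex.nonneg_iff.mp (hB z)).2.symm) x y

theorem norm_apply_sq_le_of_nonneg (B : E →ₗ[ℂ] E →ₗ⋆[ℂ] ℂ) (hB : ∀ x, 0 ≤ B x x) (x y : E) :
    ‖B x y‖ ^ 2 ≤ (B x x).re * (B y y).re := by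
  -- Mathlib's inner products are conjugate-linear in the first argument, hence the swap.
  let _ : PreInnerProductSpace.Core ℂ E :=
    { inner x y := B y x
      conj_inner_symm x y := (B.apply_swap_eq_conj_of_nonneg hB x y).symm
      re_inner_nonneg x := (Complex.nonneg_iff.mp (hB x)).1
      add_left x y z := by simp
      smul_left x y r := by simp }
  have h : ‖B y x‖ * ‖B x y‖ ≤ (B x x).re * (B y y).re :=
    InnerProductSpace.Core.inner_mul_inner_self_le (𝕜 := ℂ) x y
  rwa [B.apply_swap_eq_conj_of_nonneg hB, Complex.norm_conj, ← sq] at h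

end LinearMap

theorem Complex.nonneg_add_conj_add_of_norm_sq_le {a b c : ℂ} (ha : 0 ≤ a) (hb : 0 ≤ b)
    (h : ‖c‖ ^ 2 ≤ a.re * b.re) : 0 ≤ a + conj c + c + b := by
  obtain ⟨ha, ha'⟩ := Complex.nonneg_iff.mp ha
  obtain ⟨hb, hb'⟩ := Complex.nonneg_iff.mp hb
  have hre : |2 * c.re| ≤ a.re + b.re := by
    refine abs_le_of_sq_le_sq ?_ (by positivity)
    nlinarith [Complex.re_sq_le_normSq c, Complex.normSq_eq_norm_sq c, sq_nonneg (a.re - b.re)]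
  rw [Complex.nonneg_iff]
  constructor
  · simp only [Complex.add_re, Complex.conj_re]
    linarith [neg_abs_le (2 * c.re)]
  · simp only [Complex.add_im, Complex.conj_im]
    linarith

section BlockForm

variable {V : Type*} [AddCommGroup V] [Module ℂ V]

def blockForm (α β γ : V →ₗ[ℂ] V →ₗ⋆[ℂ] ℂ) : V × V →ₗ[ℂ] V × V →ₗ⋆[ℂ] ℂ :=
  (α.comp (LinearMap.fst ℂ V V)).compl₂ (LinearMap.fst ℂ V V) +
    (γ.comp (LinearMap.snd ℂ V V)).compl₂ (LinearMap.fst ℂ V V) +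
    (γ.comp (LinearMap.fst ℂ V V)).compl₂ (LinearMap.snd ℂ V V) +
    (β.comp (LinearMap.snd ℂ V V)).compl₂ (LinearMap.snd ℂ V V)

@[simp]
theorem blockForm_apply (α β γ : V →ₗ[ℂ] V →ₗ⋆[ℂ] ℂ) (x y : V × V) :
    blockForm α β γ x y = α x.1 y.1 + γ x.2 y.1 + γ x.1 y.2 + β x.2 y.2 :=
  rfl

end BlockForm

/-- for positive sesquilinear forms `α, β, γ` on a complex vector space `V`
(linear in the first variable, conjugate-linear in the second), the block form
`Γ((x₁,x₂),(y₁,y₂)) = α(x₁,y₁) + γ(x₂,y₁) + γ(x₁,y₂) + β(x₂,y₂)` is positive semidefinite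
on `V × V` if and only if `|γ(x,y)|² ≤ α(x,x)·β(y,y)` for all `x, y ∈ V`. -/
theorem block_form_pos_iff_dominated {V : Type*} [AddCommGroup V] [Module ℂ V]
    (α β γ : V →ₗ[ℂ] V →ₗ⋆[ℂ] ℂ)
    (hα : ∀ x, 0 ≤ α x x) (hβ : ∀ x, 0 ≤ β x x) (hγ : ∀ x, 0 ≤ γ x x) :
    (∀ x₁ x₂ : V, 0 ≤ α x₁ x₁ + γ x₂ x₁ + γ x₁ x₂ + β x₂ x₂) ↔
      (∀ x y : V, ‖γ x y‖ ^ 2 ≤ (α x x).re * (β y y).re) := by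
  constructor
  · intro hpos x y
    simpa using (blockForm α β γ).norm_apply_sq_le_of_nonneg (fun z ↦ hpos z.1 z.2) (x, 0) (0, y)
  · intro hdom x₁ x₂
    rw [γ.apply_swap_eq_conj_of_nonneg hγ]
    exact Complex.nonneg_add_conj_add_of_norm_sq_le (hα x₁) (hβ x₂) (hdom x₁ x₂)
end

section
/- For bounded positive operators A, B on a Hilbert space, the parallel sum A : B (defined for invertible A, B as (A⁻¹ + B⁻¹)⁻¹, and in general as the strong limit of (A+εI) : (B+εI) as ε ↓ 0) satisfies the variational formula ⟨(A : B)z, z⟩ = inf { ⟨Ax, x⟩ + ⟨By, y⟩ : z = x + y } for every vector z. -/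
/-! For invertible positive `T, S` and `w = (T⁻¹ + S⁻¹)⁻¹ z`, the split `x₀ = T⁻¹ w`,
`y₀ = S⁻¹ w` of `z` satisfies `T x₀ = S y₀ = w`. This first-order condition makes it the
minimiser of `⟪T x, x⟫ + ⟪S y, y⟫` over `x + y = z`: moving to `(x₀ + u, y₀ - u)` adds
`⟪T u, u⟫ + ⟪S u, u⟫ ≥ 0`. The minimum is `⟪w, z⟫ = ⟪(T : S) z, z⟫`.
For `T = A + ε`, `S = B + ε` the energy is that of `A, B` plus `ε (‖x‖² + ‖y‖²)`, so as `ε ↓ 0`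
the minima converge to the infimum for `A, B`. -/

open Filter Topology

open scoped InnerProductSpace Ring

section SplitEnergy

variable {𝕜 E : Type*} [RCLike 𝕜] [NormedAddCommGroup E] [InnerProductSpace 𝕜 E]

open RCLike

def splitEnergy (T S : E →L[𝕜] E) (p : E × E) : ℝ :=
  re ⟪T p.1, p.1⟫_𝕜 + re ⟪S p.2, p.2⟫_𝕜

lemma LinearMap.IsSymmetric.re_inner_apply_add_self {T : E →ₗ[𝕜] E} (hT : T.IsSymmetric)
    (a u : E) :
    re ⟪T (a + u), a + u⟫_𝕜 = re ⟪T a, a⟫_𝕜 + 2 * re ⟪T a, u⟫_𝕜 + re ⟪T u, u⟫_𝕜 := by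
  have hcross : re ⟪T u, a⟫_𝕜 = re ⟪T a, u⟫_𝕜 := by
    rw [hT u a, ← inner_conj_symm, conj_re]
  simp only [map_add, inner_add_left, inner_add_right]
  linarith

lemma splitEnergy_le_of_apply_eq {T S : E →L[𝕜] E} (hT : T.IsPositive) (hS : S.IsPositive)
    {x₀ y₀ x y : E} (hxy₀ : T x₀ = S y₀) (hxy : x + y = x₀ + y₀) :
    splitEnergy T S (x₀, y₀) ≤ splitEnergy T S (x, y) := by
  obtain ⟨u, rfl⟩ : ∃ u, x = x₀ + u := ⟨x - x₀, by abel⟩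
  obtain rfl : y = y₀ + -u := by rw [← add_right_inj (x₀ + u), hxy]; abel
  have hT' := hT.isSymmetric.re_inner_apply_add_self x₀ u
  have hS' := hS.isSymmetric.re_inner_apply_add_self y₀ (-u)
  simp only [ContinuousLinearMap.coe_coe, map_neg, inner_neg_left, inner_neg_right, neg_neg]
    at hT' hS'
  simp only [splitEnergy, hT', hS', hxy₀]
  linarith [hT.re_inner_nonneg_left u, hS.re_inner_nonneg_left u]

lemma IsStrictlyPositive.isPositive {T : E →L[𝕜] E} (hT : IsStrictlyPositive T) :
    T.IsPositive :=
  (ContinuousLinearMap.nonneg_iff_isPositive T).mp hT.nonneg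

end SplitEnergy

lemma isGLB_image_of_tendsto_perturbed {ι : Type*} {s : Set ι} {f c : ι → ℝ}
    (hc : ∀ i ∈ s, 0 ≤ c i) {g : ℝ → ℝ}
    (hg : ∀ ε > 0, IsGLB ((fun i => f i + ε * c i) '' s) (g ε)) {L : ℝ}
    (hL : Tendsto g (𝓝[>] 0) (𝓝 L)) : IsGLB (f '' s) L := by
  constructor
  · rintro _ ⟨i, hi, rfl⟩
    have hlim : Tendsto (fun ε : ℝ => f i + ε * c i) (𝓝 0) (𝓝 (f i)) := by
      simpa using (Continuous.tendsto (f := fun ε : ℝ => f i + ε * c i) (by fun_prop) 0)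
    refine le_of_tendsto_of_tendsto hL (hlim.mono_left nhdsWithin_le_nhds) ?_
    filter_upwards [self_mem_nhdsWithin] with ε hε
    exact (hg ε hε).1 ⟨i, hi, rfl⟩
  · intro b hb
    refine ge_of_tendsto hL ?_
    filter_upwards [self_mem_nhdsWithin] with ε (hε : 0 < ε)
    refine (hg ε hε).2 ?_
    rintro _ ⟨i, hi, rfl⟩
    have := hb ⟨i, hi, rfl⟩
    nlinarith [hc i hi]

section Complex

variable {H : Type*} [NormedAddCommGroup H] [InnerProductSpace ℂ H]

lemma splitEnergy_add_smul_one (T S : H →L[ℂ] H) (ε : ℝ) (p : H × H) :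
    splitEnergy (T + ε • 1) (S + ε • 1) p = splitEnergy T S p + ε * (‖p.1‖ ^ 2 + ‖p.2‖ ^ 2) := by
  simp only [splitEnergy, add_apply, smul_apply, one_apply_eq_self, inner_add_left,
    ← Complex.coe_smul, inner_smul_left, Complex.conj_ofReal, map_add, RCLike.re_to_complex,
    Complex.re_ofReal_mul]
  simp only [← RCLike.re_to_complex, inner_self_eq_norm_sq]
  ring

variable [CompleteSpace H]

lemma ContinuousLinearMap.IsPositive.isStrictlyPositive_add_smul_one {T : H →L[ℂ] H}
    (hT : T.IsPositive) {ε : ℝ} (hε : 0 < ε) : IsStrictlyPositive (T + ε • 1) :=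
  IsStrictlyPositive.nonneg_add ((nonneg_iff_isPositive T).mpr hT)
    (IsStrictlyPositive.smul hε isStrictlyPositive_one)

lemma isLeast_splitEnergy_parallelSum {T S : H →L[ℂ] H} (hT : IsStrictlyPositive T)
    (hS : IsStrictlyPositive S) (z : H) :
    IsLeast (splitEnergy T S '' {p | z = p.1 + p.2})
      (RCLike.re ⟪(T⁻¹ʳ + S⁻¹ʳ)⁻¹ʳ z, z⟫_ℂ) := by
  set w := (T⁻¹ʳ + S⁻¹ʳ)⁻¹ʳ z
  have hunit : IsUnit (T⁻¹ʳ + S⁻¹ʳ) :=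
    (IsStrictlyPositive.add_nonneg hT.ringInverse hS.ringInverse.nonneg).isUnit
  have hsum : T⁻¹ʳ w + S⁻¹ʳ w = z := DFunLike.congr_fun (Ring.mul_inverse_cancel _ hunit) z
  have hTw : T (T⁻¹ʳ w) = w := DFunLike.congr_fun (Ring.mul_inverse_cancel T hT.isUnit) w
  have hSw : S (S⁻¹ʳ w) = w := DFunLike.congr_fun (Ring.mul_inverse_cancel S hS.isUnit) w
  have hsplit : splitEnergy T S (T⁻¹ʳ w, S⁻¹ʳ w) = RCLike.re ⟪w, z⟫_ℂ := by
    simp only [splitEnergy, hTw, hSw, ← map_add, ← inner_add_right, hsum]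
  refine ⟨⟨_, hsum.symm, hsplit⟩, ?_⟩
  rintro _ ⟨⟨x, y⟩, hxy, rfl⟩
  rw [← hsplit]
  exact splitEnergy_le_of_apply_eq hT.isPositive hS.isPositive (hTw.trans hSw.symm)
    (hsum.trans hxy).symm

end Complex

/-- for bounded positive operators `A, B` on a complex Hilbert space, the
parallel sum `A : B` (the strong limit of `((A+εI)⁻¹ + (B+εI)⁻¹)⁻¹` as `ε ↓ 0`) satisfies
the variational formula `⟨(A:B)z, z⟩ = inf { ⟨Ax,x⟩ + ⟨By,y⟩ : z = x + y }`. -/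
theorem parallel_sum_variational {H : Type*} [NormedAddCommGroup H]
    [InnerProductSpace ℂ H] [CompleteSpace H]
    (A B P : H →L[ℂ] H) (hA : A.IsPositive) (hB : B.IsPositive)
    (hP : ∀ z : H, Tendsto (fun ε : ℝ =>
        (Ring.inverse (Ring.inverse (A + ε • 1) + Ring.inverse (B + ε • 1))) z)
      (𝓝[>] (0 : ℝ)) (𝓝 (P z)))
    (z : H) :
    (inner ℂ (P z) z : ℂ).re =
      sInf { r : ℝ | ∃ x y : H, z = x + y ∧
        r = (inner ℂ (A x) x : ℂ).re + (inner ℂ (B y) y : ℂ).re } := by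
  have hset : { r : ℝ | ∃ x y : H, z = x + y ∧
      r = (inner ℂ (A x) x : ℂ).re + (inner ℂ (B y) y : ℂ).re } =
      splitEnergy A B '' {p | z = p.1 + p.2} := by
    ext r
    constructor
    · rintro ⟨x, y, hxy, rfl⟩
      exact ⟨(x, y), hxy, rfl⟩
    · rintro ⟨⟨x, y⟩, hxy, rfl⟩
      exact ⟨x, y, hxy, rfl⟩
  have hlim : Tendsto (fun ε : ℝ => RCLike.re ⟪(Ring.inverse (Ring.inverse (A + ε • 1) +
      Ring.inverse (B + ε • 1))) z, z⟫_ℂ) (𝓝[>] 0) (𝓝 (RCLike.re ⟪P z, z⟫_ℂ)) :=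
    (RCLike.continuous_re.tendsto _).comp ((hP z).inner tendsto_const_nhds)
  have hglb : IsGLB (splitEnergy A B '' {p | z = p.1 + p.2}) (RCLike.re ⟪P z, z⟫_ℂ) := by
    refine isGLB_image_of_tendsto_perturbed (c := fun p => ‖p.1‖ ^ 2 + ‖p.2‖ ^ 2)
      (fun p _ => by positivity) (fun ε hε => ?_) hlim
    simp only [← splitEnergy_add_smul_one]
    exact (isLeast_splitEnergy_parallelSum (hA.isStrictlyPositive_add_smul_one hε)
      (hB.isStrictlyPositive_add_smul_one hε) z).isGLB
  rw [hset]
  exact (hglb.csInf_eq ⟨_, (z, 0), (add_zero z).symm, rfl⟩).symm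
end

section
/- For bounded positive operators A, B on a complex Hilbert space, the geometric mean A # B is the maximum (with respect to the Loewner order) of the set of self-adjoint operators X such that the block operator [[A, X],[X, B]] on H ⊕ H is positive. -/
/-!
For invertible `A` put `s = A^{1/2}` and `M = s⁻¹ B s⁻¹`, so that `A # B = s M^{1/2} s`.
Conjugating by `s⁻¹ ⊕ s⁻¹` turns `[[A, X], [X, B]] ≥ 0` into `[[1, c], [c, M]] ≥ 0` with
`c = s⁻¹ X s⁻¹`, which says `c² ≤ M` (Schur complement); operator monotonicity of the square root
then gives `c ≤ |c| ≤ M^{1/2}`, while `c = M^{1/2}` itself is admissible. For general `A, B`, every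
`X` admissible for `A, B` is admissible for `A + ε, B + ε`, hence `X ≤ (A + ε) # (B + ε)`, and
self-adjointness, block positivity and these inequalities all survive the strong limit `ε → 0`.
-/

open Filter Topology

variable {H : Type*} [NormedAddCommGroup H] [InnerProductSpace ℂ H] [CompleteSpace H]

/-- The square root of a (positive) bounded operator, via the continuous functional
calculus. -/
noncomputable def opSqrt (A : H →L[ℂ] H) : H →L[ℂ] H := cfc Real.sqrt A

/-- The geometric mean `A # B = A^{1/2}(A^{-1/2} B A^{-1/2})^{1/2} A^{1/2}` of invertible
positive operators. -/
noncomputable def gmInv (A B : H →L[ℂ] H) : H →L[ℂ] H :=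
  opSqrt A * opSqrt (Ring.inverse (opSqrt A) * B * Ring.inverse (opSqrt A)) * opSqrt A

/-- Positivity of the block operator `[[A, X],[X, B]]` on `H ⊕ H`, expressed via its
quadratic form. -/
def BlockPos (A X B : H →L[ℂ] H) : Prop :=
  ∀ ξ η : H,
    0 ≤ ((inner ℂ (A ξ) ξ : ℂ) + (inner ℂ (X η) ξ : ℂ) + (inner ℂ (X ξ) η : ℂ) +
      (inner ℂ (B η) η : ℂ)).re

open scoped InnerProductSpace
open ContinuousLinearMap

lemma mul_mul_mul_cancel_of_mul_eq_one {M : Type*} [Monoid M] {a b : M} (hab : a * b = 1)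
    (hba : b * a = 1) (y : M) : a * (b * y * b) * a = y := by
  rw [mul_assoc, mul_assoc, hba, mul_one, ← mul_assoc, hab, one_mul]

section CStarAlgebra

variable {A : Type*} [CStarAlgebra A] [PartialOrder A] [StarOrderedRing A]

lemma CFC.le_sqrt_of_mul_self_le {a b : A} (ha : IsSelfAdjoint a) (hab : a * a ≤ b) :
    a ≤ CFC.sqrt b := calc
  a ≤ CFC.abs a :=
    sub_nonneg.mp (CFC.abs_sub_self a ▸ smul_nonneg zero_le_two (CFC.negPart_nonneg a))
  _ = CFC.sqrt (a * a) := by rw [CFC.abs, ha.star_eq]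
  _ ≤ CFC.sqrt b := CFC.sqrt_le_sqrt _ _ hab

lemma isStrictlyPositive_add_smul_one {a : A} (ha : 0 ≤ a) {ε : ℝ} (hε : 0 < ε) :
    IsStrictlyPositive (a + ε • 1) :=
  IsStrictlyPositive.nonneg_add ha (isStrictlyPositive_one.smul hε)

end CStarAlgebra

lemma opSqrt_eq_sqrt {A : H →L[ℂ] H} (hA : 0 ≤ A) : opSqrt A = CFC.sqrt A := by
  rw [opSqrt, CFC.sqrt_eq_real_sqrt A hA, cfcₙ_eq_cfc]

lemma BlockPos.mono {E : Type*} [NormedAddCommGroup E] [InnerProductSpace ℂ E]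
    {A X B A' B' : E →L[ℂ] E} (h : BlockPos A X B) (hA : A ≤ A') (hB : B ≤ B') :
    BlockPos A' X B' := by
  intro ξ η
  have hAξ := ((le_def _ _).mp hA).re_inner_nonneg_left ξ
  have hBη := ((le_def _ _).mp hB).re_inner_nonneg_left η
  have := h ξ η
  simp only [sub_apply, inner_sub_left, RCLike.re_to_complex, Complex.sub_re, Complex.add_re] at *
  linarith

lemma BlockPos.conj {A X B : H →L[ℂ] H} (h : BlockPos A X B) (T : H →L[ℂ] H) :
    BlockPos (star T * A * T) (star T * X * T) (star T * B * T) := by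
  intro ξ η
  simpa only [mul_apply_eq_comp, star_eq_adjoint, adjoint_inner_left] using h (T ξ) (T η)

lemma blockPos_one_mul_self {c : H →L[ℂ] H} (hc : IsSelfAdjoint c) : BlockPos 1 c (c * c) := by
  intro ξ η
  have hsymm : ∀ x y, ⟪c x, y⟫_ℂ = ⟪x, c y⟫_ℂ := hc.isSymmetric
  have hsq : ⟪ξ + c η, ξ + c η⟫_ℂ =
      ⟪(1 : H →L[ℂ] H) ξ, ξ⟫_ℂ + ⟪c η, ξ⟫_ℂ + ⟪c ξ, η⟫_ℂ + ⟪(c * c) η, η⟫_ℂ := by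
    rw [inner_add_add_self, one_apply_eq_self, mul_apply_eq_comp, ← hsymm ξ η, hsymm (c η) η]
    ring
  exact hsq ▸ inner_self_nonneg (𝕜 := ℂ)

/-- The Schur complement: test the block form at `(-c η, η)`. -/
lemma BlockPos.mul_self_le {c M : H →L[ℂ] H} (h : BlockPos 1 c M) (hc : IsSelfAdjoint c)
    (hM : IsSelfAdjoint M) : c * c ≤ M := by
  refine (le_def _ _).mpr ((isPositive_def' (T := M - c * c)).mpr ⟨?_, fun η => ?_⟩)
  · simpa only [hc.star_eq] using hM.sub (IsSelfAdjoint.star_mul_self c)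
  · have := h (-c η) η
    simp only [one_apply_eq_self, map_neg, inner_neg_left, inner_neg_right, neg_neg] at this
    simp only [reApplyInnerSelf, sub_apply, mul_apply_eq_comp, inner_sub_left,
      RCLike.re_to_complex]
    convert this using 1
    simp only [Complex.sub_re, Complex.add_re, Complex.neg_re]
    ring

theorem isGreatest_gmInv {A B : H →L[ℂ] H} (hA : IsStrictlyPositive A) (hB : 0 ≤ B) :
    IsGreatest {X | IsSelfAdjoint X ∧ BlockPos A X B} (gmInv A B) := by
  set s := CFC.sqrt A
  set S := Ring.inverse s
  have hs : IsStrictlyPositive s := hA.sqrt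
  have hS : IsStrictlyPositive S := hs.ringInverse
  have hsS : s * S = 1 := Ring.mul_inverse_cancel s hs.isUnit
  have hSs : S * s = 1 := Ring.inverse_mul_cancel s hs.isUnit
  have hss : s * 1 * s = A := by rw [mul_one, CFC.sqrt_mul_sqrt_self A hA.nonneg]
  set M := S * B * S
  have hM : 0 ≤ M := conjugate_nonneg_of_nonneg hB hS.nonneg
  set m := CFC.sqrt M
  have hm : IsSelfAdjoint m := .of_nonneg (CFC.sqrt_nonneg M)
  have hgm : gmInv A B = s * m * s := by
    rw [gmInv, opSqrt_eq_sqrt hA.nonneg, opSqrt_eq_sqrt hM]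
  refine ⟨⟨?_, ?_⟩, fun X ⟨hX, hXB⟩ => ?_⟩
  · simpa only [hgm, hs.isSelfAdjoint.star_eq] using hm.conjugate s
  · have h := (blockPos_one_mul_self hm).conj s
    rwa [hs.isSelfAdjoint.star_eq, hss, CFC.sqrt_mul_sqrt_self M hM,
      mul_mul_mul_cancel_of_mul_eq_one hsS hSs, ← hgm] at h
  · have hc : IsSelfAdjoint (S * X * S) := by
      simpa only [hS.isSelfAdjoint.star_eq] using hX.conjugate S
    have h := hXB.conj S
    rw [hS.isSelfAdjoint.star_eq, ← hss, mul_mul_mul_cancel_of_mul_eq_one hSs hsS] at h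
    have hcm : S * X * S ≤ m := CFC.le_sqrt_of_mul_self_le hc (h.mul_self_le hc hM.isSelfAdjoint)
    simpa only [hgm, mul_mul_mul_cancel_of_mul_eq_one hsS hSs] using
      hs.isSelfAdjoint.conjugate_le_conjugate hcm

section Limits

variable {ι : Type*} {l : Filter ι} [l.NeBot]

lemma blockPos_of_tendsto {E : Type*} [NormedAddCommGroup E] [InnerProductSpace ℂ E]
    {Aᵢ Xᵢ Bᵢ : ι → E →L[ℂ] E} {A X B : E →L[ℂ] E}
    (hA : ∀ ξ, Tendsto (fun i => Aᵢ i ξ) l (𝓝 (A ξ)))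
    (hX : ∀ ξ, Tendsto (fun i => Xᵢ i ξ) l (𝓝 (X ξ)))
    (hB : ∀ ξ, Tendsto (fun i => Bᵢ i ξ) l (𝓝 (B ξ)))
    (h : ∀ᶠ i in l, BlockPos (Aᵢ i) (Xᵢ i) (Bᵢ i)) : BlockPos A X B := fun ξ η =>
  ge_of_tendsto (Complex.continuous_re.continuousAt.tendsto.comp
    (((((hA ξ).inner tendsto_const_nhds).add ((hX η).inner tendsto_const_nhds)).add
      ((hX ξ).inner tendsto_const_nhds)).add ((hB η).inner tendsto_const_nhds)))
    (h.mono fun _ hi => hi ξ η)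

variable {F : ι → H →L[ℂ] H} {G : H →L[ℂ] H}

lemma isSelfAdjoint_of_tendsto (hF : ∀ ξ, Tendsto (fun i => F i ξ) l (𝓝 (G ξ)))
    (h : ∀ᶠ i in l, IsSelfAdjoint (F i)) : IsSelfAdjoint G := by
  refine (isSelfAdjoint_iff_isSymmetric).mpr fun ξ η => tendsto_nhds_unique
    (((hF ξ).inner tendsto_const_nhds).congr' ?_) (tendsto_const_nhds.inner (hF η))
  filter_upwards [h] with i hi
  exact hi.isSymmetric ξ η

lemma isPositive_of_tendsto (hF : ∀ ξ, Tendsto (fun i => F i ξ) l (𝓝 (G ξ)))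
    (h : ∀ᶠ i in l, (F i).IsPositive) : G.IsPositive :=
  isPositive_def'.mpr ⟨isSelfAdjoint_of_tendsto hF (h.mono fun _ hi => hi.isSelfAdjoint),
    fun ξ => ge_of_tendsto (Complex.continuous_re.continuousAt.tendsto.comp
      ((hF ξ).inner tendsto_const_nhds)) (h.mono fun _ hi => hi.re_inner_nonneg_left ξ)⟩

end Limits

lemma tendsto_add_smul_one_apply {E : Type*} [NormedAddCommGroup E] [NormedSpace ℂ E]
    (T : E →L[ℂ] E) (ξ : E) :
    Tendsto (fun ε : ℝ => (T + ε • 1) ξ) (𝓝[>] 0) (𝓝 (T ξ)) := by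
  have : Tendsto (fun ε : ℝ => T ξ + ε • ξ) (𝓝 0) (𝓝 (T ξ + (0 : ℝ) • ξ)) :=
    tendsto_const_nhds.add (tendsto_id.smul_const ξ)
  simpa using this.mono_left nhdsWithin_le_nhds

/-- the geometric mean `A # B` of bounded positive operators (defined as the
strong limit of `(A+εI) # (B+εI)` with the invertible-case formula) is the maximum, in the
Loewner order, of the set of self-adjoint `X` with `[[A, X],[X, B]]` positive. -/
theorem geom_mean_is_greatest (A B G : H →L[ℂ] H)
    (hA : A.IsPositive) (hB : B.IsPositive)
    (hG : ∀ ξ : H, Tendsto (fun ε : ℝ => gmInv (A + ε • 1) (B + ε • 1) ξ)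
      (𝓝[>] (0 : ℝ)) (𝓝 (G ξ))) :
    (IsSelfAdjoint G ∧ BlockPos A G B) ∧
      ∀ X : H →L[ℂ] H, IsSelfAdjoint X → BlockPos A X B → (G - X).IsPositive := by
  have hA0 : 0 ≤ A := (nonneg_iff_isPositive A).mpr hA
  have hB0 : 0 ≤ B := (nonneg_iff_isPositive B).mpr hB
  have hgm : ∀ᶠ ε in 𝓝[>] (0 : ℝ),
      IsGreatest {X | IsSelfAdjoint X ∧ BlockPos (A + ε • 1) X (B + ε • 1)}
        (gmInv (A + ε • 1) (B + ε • 1)) := by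
    filter_upwards [self_mem_nhdsWithin] with ε hε
    exact isGreatest_gmInv (isStrictlyPositive_add_smul_one hA0 hε)
      (isStrictlyPositive_add_smul_one hB0 hε).nonneg
  refine ⟨⟨isSelfAdjoint_of_tendsto hG (hgm.mono fun _ h => h.1.1),
    blockPos_of_tendsto (tendsto_add_smul_one_apply A) hG (tendsto_add_smul_one_apply B)
      (hgm.mono fun _ h => h.1.2)⟩, fun X hX hXB => ?_⟩
  refine isPositive_of_tendsto (F := fun ε : ℝ => gmInv (A + ε • 1) (B + ε • 1) - X)
    (fun ξ => (hG ξ).sub_const (X ξ)) ?_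
  filter_upwards [hgm, self_mem_nhdsWithin] with ε hmax hε
  have hε1 : (0 : H →L[ℂ] H) ≤ ε • 1 := smul_nonneg hε.le zero_le_one
  exact (le_def _ _).mp <|
    hmax.2 ⟨hX, hXB.mono (le_add_of_nonneg_right hε1) (le_add_of_nonneg_right hε1)⟩
end

section
/- For positive semidefinite matrices A₁, A₂, B₁, B₂ of the same size, (A₁ # B₁) + (A₂ # B₂) ≤ (A₁ + A₂) # (B₁ + B₂) in the Loewner order (joint concavity/superadditivity of the geometric mean). -/
open scoped ComplexOrder

/-- Loewner order on complex matrices: `A ≤ B` iff `B - A` is positive semidefinite. -/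
def LoewnerLE {n : Type*} [Fintype n] (A B : Matrix n n ℂ) : Prop := (B - A).PosSemidef

/-- `G` is the Kubo–Ando geometric mean of the positive semidefinite matrices `A` and `B`:
the maximum positive semidefinite `X` such that the block matrix `[[A, X],[X, B]]` is
positive semidefinite. -/
def IsGeomMean {n : Type*} [Fintype n] (A B G : Matrix n n ℂ) : Prop :=
  G.PosSemidef ∧ (Matrix.fromBlocks A G G B).PosSemidef ∧
    ∀ X : Matrix n n ℂ, X.PosSemidef → (Matrix.fromBlocks A X X B).PosSemidef →
      LoewnerLE X G

/-- superadditivity (joint concavity) of the matrix geometric mean: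
`(A₁ # B₁) + (A₂ # B₂) ≤ (A₁ + A₂) # (B₁ + B₂)` in the Loewner order. -/
theorem geom_mean_superadditive {n : Type*} [Fintype n]
    (A₁ A₂ B₁ B₂ G₁ G₂ G : Matrix n n ℂ)
    (hA₁ : A₁.PosSemidef) (hA₂ : A₂.PosSemidef) (hB₁ : B₁.PosSemidef) (hB₂ : B₂.PosSemidef)
    (hG₁ : IsGeomMean A₁ B₁ G₁) (hG₂ : IsGeomMean A₂ B₂ G₂)
    (hG : IsGeomMean (A₁ + A₂) (B₁ + B₂) G) :
    LoewnerLE (G₁ + G₂) G := by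
  apply hG.2.2
  · exact hG₁.1.add hG₂.1
  · rw [← Matrix.fromBlocks_add]
    exact hG₁.2.1.add hG₂.2.1
end

section
/- Let Φ(x) = x be the identity map on M₂(ℂ) and Ψ(x) = UxU* with U = diag(1,−1). Both are unital CP maps, but their geometric mean is zero: Φ # Ψ = 0. Hence the geometric mean of unital CP maps need not be unital. -/
open Matrix
open scoped ComplexOrder

/-- A linear map between matrix algebras is completely positive if every amplification
`id_{M_k} ⊗ Φ` preserves positive semidefiniteness. -/
def IsCP {m n : Type*} [Fintype m] [Fintype n]
    (Φ : Matrix m m ℂ →ₗ[ℂ] Matrix n n ℂ) : Prop :=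
  ∀ (k : ℕ) (M : Matrix (Fin k × m) (Fin k × m) ℂ), M.PosSemidef →
    (Matrix.of fun p q : Fin k × n =>
      Φ (Matrix.of fun x y => M (p.1, x) (q.1, y)) p.2 q.2).PosSemidef

/-- The block map `x ↦ [[Φ(x), Θ(x)],[Θ(x), Ψ(x)]]`. -/
noncomputable def blockMap {m n : Type*} [Fintype m] [Fintype n]
    (Φ Θ Ψ : Matrix m m ℂ →ₗ[ℂ] Matrix n n ℂ) :
    Matrix m m ℂ →ₗ[ℂ] Matrix (n ⊕ n) (n ⊕ n) ℂ where
  toFun x := Matrix.fromBlocks (Φ x) (Θ x) (Θ x) (Ψ x)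
  map_add' x y := by ext (i | i) (j | j) <;> simp [Matrix.fromBlocks]
  map_smul' c x := by ext (i | i) (j | j) <;> simp [Matrix.fromBlocks]

/-- The adjoint (conjugation) map `Ψ_M(x) = M x M*`. -/
noncomputable def conjMap {n : Type*} [Fintype n] (M : Matrix n n ℂ) :
    Matrix n n ℂ →ₗ[ℂ] Matrix n n ℂ where
  toFun x := M * x * Mᴴ
  map_add' x y := by simp [Matrix.add_mul, Matrix.mul_add]
  map_smul' c x := by simp [Matrix.smul_mul, Matrix.mul_smul]

/-! The Choi matrix of `x ↦ [[A x A*, Θ x], [Θ x, B x B*]]` is, after reordering indices,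
`[[a a*, C], [C, b b*]]` with `a = vec A`, `b = vec B` and `C` the Choi matrix of `Θ`.
Positivity makes `C` vanish on `b^⊥` through its upper-right copy and on `a^⊥` through its
lower-left copy. If `⟪a, b⟫ = tr (A* B) = 0` these two subspaces span everything, so `C = 0` and
`Θ = 0`; this applies to `A = 1`, `B = diag(1, -1)`. -/

namespace Matrix

variable {n : Type*} [Fintype n]

theorem PosSemidef.mulVec_eq_zero_of_fromBlocks_right {A B C D : Matrix n n ℂ}
    (h : (fromBlocks A B C D).PosSemidef) {u : n → ℂ} (hu : star u ⬝ᵥ D *ᵥ u = 0) :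
    B *ᵥ u = 0 := by
  have hstar : star (Sum.elim 0 u : n ⊕ n → ℂ) = Sum.elim (0 : n → ℂ) (star u) := by
    ext (i | i) <;> simp
  have hz := (h.dotProduct_mulVec_zero_iff (Sum.elim 0 u)).mp <| by
    rw [hstar, fromBlocks_mulVec, dotProduct_block]
    simpa using hu
  rw [fromBlocks_mulVec] at hz
  simpa using congr_arg (· ∘ Sum.inl) hz

theorem PosSemidef.mulVec_eq_zero_of_fromBlocks_left {A B C D : Matrix n n ℂ}
    (h : (fromBlocks A B C D).PosSemidef) {u : n → ℂ} (hu : star u ⬝ᵥ A *ᵥ u = 0) :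
    C *ᵥ u = 0 := by
  have hswap := h.submatrix Sum.swap
  rw [fromBlocks_submatrix_sum_swap_sum_swap] at hswap
  exact hswap.mulVec_eq_zero_of_fromBlocks_right hu

theorem star_dotProduct_vecMulVec_mulVec_eq_zero {c u : n → ℂ} (hu : star c ⬝ᵥ u = 0) :
    star u ⬝ᵥ vecMulVec c (star c) *ᵥ u = 0 := by
  simp [vecMulVec_mulVec, hu]

theorem mulVec_eq_zero_of_orthogonal {B : Matrix n n ℂ} {a c : n → ℂ} (hac : star a ⬝ᵥ c = 0)
    (ha : ∀ u, star a ⬝ᵥ u = 0 → B *ᵥ u = 0) (hc : ∀ u, star c ⬝ᵥ u = 0 → B *ᵥ u = 0)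
    (u : n → ℂ) : B *ᵥ u = 0 := by
  by_cases hc0 : c = 0
  · exact hc u (by simp [hc0])
  set t := (star c ⬝ᵥ u) / (star c ⬝ᵥ c)
  have hcc : star c ⬝ᵥ c ≠ 0 := dotProduct_star_self_eq_zero.not.mpr hc0
  have h1 : star c ⬝ᵥ (u - t • c) = 0 := by
    rw [dotProduct_sub, dotProduct_smul, smul_eq_mul, div_mul_cancel₀ _ hcc, sub_self]
  have h2 : star a ⬝ᵥ (t • c) = 0 := by rw [dotProduct_smul, hac, smul_zero]
  rw [← sub_add_cancel u (t • c), mulVec_add, hc _ h1, ha _ h2, add_zero]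

theorem eq_zero_of_posSemidef_fromBlocks_vecMulVec {a c : n → ℂ} {B : Matrix n n ℂ}
    (h : (fromBlocks (vecMulVec a (star a)) B B (vecMulVec c (star c))).PosSemidef)
    (hac : star a ⬝ᵥ c = 0) : B = 0 := by
  have hB : ∀ u, B *ᵥ u = 0 := mulVec_eq_zero_of_orthogonal hac
    (fun _ hu => h.mulVec_eq_zero_of_fromBlocks_left (star_dotProduct_vecMulVec_mulVec_eq_zero hu))
    (fun _ hu => h.mulVec_eq_zero_of_fromBlocks_right (star_dotProduct_vecMulVec_mulVec_eq_zero hu))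
  exact mulVec_injective (funext fun u => by rw [hB, zero_mulVec])

end Matrix

def choiMatrix {m n : Type*} [DecidableEq m] (Φ : Matrix m m ℂ →ₗ[ℂ] Matrix n n ℂ) :
    Matrix (m × n) (m × n) ℂ :=
  of fun p q => Φ (single p.1 q.1 1) p.2 q.2

section Choi

variable {m n : Type*} [Fintype m] [DecidableEq m] [Fintype n]

omit [Fintype n] in
theorem eq_zero_of_choiMatrix_eq_zero {Φ : Matrix m m ℂ →ₗ[ℂ] Matrix n n ℂ}
    (h : choiMatrix Φ = 0) : Φ = 0 := by
  have hsingle : ∀ a b, Φ (single a b 1) = 0 := fun a b => by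
    ext x y; exact congr_fun (congr_fun h (a, x)) (b, y)
  ext x : 1
  rw [matrix_eq_sum_single x, map_sum]
  refine Finset.sum_eq_zero fun a _ => ?_
  rw [map_sum]
  refine Finset.sum_eq_zero fun b _ => ?_
  rw [← mul_one (x a b), ← smul_eq_mul, ← smul_single, map_smul, hsingle, smul_zero]

theorem choiMatrix_posSemidef_of_isCP {Φ : Matrix m m ℂ →ₗ[ℂ] Matrix n n ℂ} (hΦ : IsCP Φ) :
    (choiMatrix Φ).PosSemidef := by
  let e := Fintype.equivFin m
  -- `w w*` is the Choi matrix of the identity map, with its first index relabelled by `e`.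
  let w : Fin (Fintype.card m) × m → ℂ := fun p => if p.1 = e p.2 then 1 else 0
  have hN := hΦ _ _ (posSemidef_vecMulVec_self_star w)
  have hunit : ∀ a b, (of fun x y => vecMulVec w (star w) (e a, x) (e b, y)) = single a b 1 := by
    intro a b
    ext x y
    simp only [w, vecMulVec, single_apply, of_apply, Pi.star_apply, e.apply_eq_iff_eq]
    split_ifs <;> simp_all
  convert hN.submatrix (fun p : m × n => (e p.1, p.2)) using 1
  ext ⟨a, x⟩ ⟨b, y⟩
  simp only [choiMatrix, submatrix_apply, of_apply, hunit]

theorem choiMatrix_blockMap (Φ Θ Ψ : Matrix m m ℂ →ₗ[ℂ] Matrix n n ℂ) :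
    choiMatrix (blockMap Φ Θ Ψ) =
      (fromBlocks (choiMatrix Φ) (choiMatrix Θ) (choiMatrix Θ) (choiMatrix Ψ)).submatrix
        (Equiv.prodSumDistrib m n n) (Equiv.prodSumDistrib m n n) := by
  ext ⟨a, x | x⟩ ⟨b, y | y⟩ <;> rfl

theorem choiMatrix_conjMap (A : Matrix m m ℂ) :
    choiMatrix (conjMap A) = vecMulVec (vec A) (star (vec A)) := by
  ext ⟨a, x⟩ ⟨b, y⟩
  simp [choiMatrix, conjMap, vecMulVec, mul_apply, single_apply, ite_and]

end Choi

theorem conjMap_one {n : Type*} [Fintype n] [DecidableEq n] :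
    conjMap (1 : Matrix n n ℂ) = LinearMap.id := by
  ext x : 1
  simp [conjMap]

theorem eq_zero_of_isCP_blockMap_conjMap {n : Type*} [Fintype n] [DecidableEq n]
    {A B : Matrix n n ℂ} (hAB : (Aᴴ * B).trace = 0) {Θ : Matrix n n ℂ →ₗ[ℂ] Matrix n n ℂ}
    (hΘ : IsCP (blockMap (conjMap A) Θ (conjMap B))) : Θ = 0 := by
  have hchoi := choiMatrix_posSemidef_of_isCP hΘ
  rw [choiMatrix_blockMap, posSemidef_submatrix_equiv, choiMatrix_conjMap,
    choiMatrix_conjMap] at hchoi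
  exact eq_zero_of_choiMatrix_eq_zero <| eq_zero_of_posSemidef_fromBlocks_vecMulVec hchoi
    (by rwa [star_vec_dotProduct_vec])

theorem geom_mean_of_unital_cp_maps_not_unital_general
    (U : Matrix (Fin 2) (Fin 2) ℂ) (hU : U = !![1, 0; 0, -1])
    (Gmap : Matrix (Fin 2) (Fin 2) ℂ →ₗ[ℂ] Matrix (Fin 2) (Fin 2) ℂ)
    (hGmem : IsCP (blockMap LinearMap.id Gmap (conjMap U))) :
    (LinearMap.id : Matrix (Fin 2) (Fin 2) ℂ →ₗ[ℂ] Matrix (Fin 2) (Fin 2) ℂ) 1 = 1 ∧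
      conjMap U 1 = 1 ∧ Gmap = 0 ∧ Gmap 1 ≠ 1 := by
  have hGmap : Gmap = 0 := by
    rw [← conjMap_one] at hGmem
    exact eq_zero_of_isCP_blockMap_conjMap (by simp [hU, trace_fin_two]) hGmem
  refine ⟨rfl, ?_, hGmap, by simp [hGmap]⟩
  subst hU
  ext i j
  fin_cases i <;> fin_cases j <;> simp [conjMap, vecMul, dotProduct, Fin.sum_univ_two]

/-- with `Φ = id` on `M₂(ℂ)` and `Ψ(x) = UxU*` for `U = diag(1,−1)`, both
maps are unital CP maps, but their geometric mean is the zero map; in particular the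
geometric mean of unital CP maps need not be unital. -/
theorem geom_mean_of_unital_cp_maps_not_unital
    (U : Matrix (Fin 2) (Fin 2) ℂ) (hU : U = !![1, 0; 0, -1])
    (Gmap : Matrix (Fin 2) (Fin 2) ℂ →ₗ[ℂ] Matrix (Fin 2) (Fin 2) ℂ)
    (hGmem : IsCP (blockMap LinearMap.id Gmap (conjMap U)))
    (hGmax : ∀ Θ : Matrix (Fin 2) (Fin 2) ℂ →ₗ[ℂ] Matrix (Fin 2) (Fin 2) ℂ,
      IsCP (blockMap LinearMap.id Θ (conjMap U)) → IsCP (Gmap - Θ)) :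
    (LinearMap.id : Matrix (Fin 2) (Fin 2) ℂ →ₗ[ℂ] Matrix (Fin 2) (Fin 2) ℂ) 1 = 1 ∧
      conjMap U 1 = 1 ∧ Gmap = 0 ∧ Gmap 1 ≠ 1 :=
  geom_mean_of_unital_cp_maps_not_unital_general U hU Gmap hGmem
end

section
/- Let A be a positive definite invertible matrix and v a nonzero vector. Then ⟨v, A⁻¹v⟩⁻¹ = max { λ > 0 : A − λ vv* ≥ 0 }, i.e. the largest λ such that A − λvv* is positive semidefinite equals the reciprocal of ⟨A⁻¹v, v⟩. -/
open Matrix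
open scoped ComplexOrder

/-!
Both Schur complements of the block matrix `[[A, B], [Bᴴ, 1]]` decide its positivity, so
`A - B Bᴴ ⪰ 0 ↔ 1 - Bᴴ A⁻¹ B ⪰ 0`. Taking for `B` the column `√λ v` turns this into
`A - λ vv* ⪰ 0 ↔ λ ⟨v, A⁻¹v⟩ ≤ 1`, and `⟨v, A⁻¹v⟩` is a positive real because `A⁻¹` is positive
definite. Hence the admissible `λ > 0` form the interval `(0, ⟨v, A⁻¹v⟩⁻¹]`.
-/

namespace Matrix.PosDef

variable {𝕜 : Type*} [RCLike 𝕜] {n m : Type*} [Fintype n] [Fintype m] [DecidableEq n]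
  {A : Matrix n n 𝕜}

theorem posSemidef_sub_mul_conjTranspose_iff [DecidableEq m] (hA : A.PosDef)
    (B : Matrix n m 𝕜) :
    (A - B * Bᴴ).PosSemidef ↔ (1 - Bᴴ * A⁻¹ * B).PosSemidef := by
  let := hA.isUnit.invertible
  let := invertibleOne (α := Matrix m m 𝕜)
  rw [← fromBlocks₁₁ B 1 hA, fromBlocks₂₂ A B PosDef.one, inv_one, Matrix.mul_one]

theorem posSemidef_sub_vecMulVec_iff (hA : A.PosDef) (w : n → 𝕜) :
    (A - vecMulVec w (star w)).PosSemidef ↔ star w ⬝ᵥ (A⁻¹ *ᵥ w) ≤ 1 := by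
  have hSchur : 1 - (replicateCol Unit w)ᴴ * A⁻¹ * replicateCol Unit w
      = diagonal fun _ => 1 - star w ⬝ᵥ (A⁻¹ *ᵥ w) := by
    rw [conjTranspose_replicateCol, Matrix.mul_assoc, ← replicateCol_mulVec,
      replicateRow_mul_replicateCol]
    ext ⟨⟩ ⟨⟩
    simp
  rw [vecMulVec_eq Unit, ← conjTranspose_replicateCol, hA.posSemidef_sub_mul_conjTranspose_iff,
    hSchur, posSemidef_diagonal_iff]
  simp

theorem posSemidef_sub_smul_vecMulVec_iff (hA : A.PosDef) (v : n → 𝕜) {t : ℝ} (ht : 0 ≤ t) :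
    (A - (t : 𝕜) • vecMulVec v (star v)).PosSemidef ↔ (t : 𝕜) * (star v ⬝ᵥ (A⁻¹ *ᵥ v)) ≤ 1 := by
  have hsqrt : ((√t : ℝ) : 𝕜) * (√t : ℝ) = t := by
    rw [← RCLike.ofReal_mul, Real.mul_self_sqrt ht]
  have := hA.posSemidef_sub_vecMulVec_iff (((√t : ℝ) : 𝕜) • v)
  simp only [star_smul, RCLike.star_def, RCLike.conj_ofReal, smul_vecMulVec, vecMulVec_smul,
    smul_smul, hsqrt, mulVec_smul, dotProduct_smul, smul_dotProduct, smul_eq_mul,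
    ← mul_assoc] at this
  exact this

end Matrix.PosDef

/-- for a positive definite (invertible) matrix `A` and a nonzero vector `v`,
`⟨v, A⁻¹v⟩⁻¹ = max { λ > 0 : A − λ vv* ≥ 0 }`. -/
theorem max_lambda_rank_one {n : Type*} [Fintype n] [DecidableEq n]
    (A : Matrix n n ℂ) (hA : A.PosDef) (v : n → ℂ) (hv : v ≠ 0) :
    ∃ r : ℝ, (r : ℂ) = (star v ⬝ᵥ (A⁻¹ *ᵥ v))⁻¹ ∧
      IsGreatest {lam : ℝ | 0 < lam ∧
        (A - (lam : ℂ) • Matrix.vecMulVec v (star v)).PosSemidef} r := by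
  obtain ⟨c, hc, hcv⟩ := RCLike.pos_iff_exists_ofReal.mp (hA.inv.dotProduct_mulVec_pos hv)
  have hset : {lam : ℝ | 0 < lam ∧ (A - (lam : ℂ) • vecMulVec v (star v)).PosSemidef}
      = Set.Ioc 0 c⁻¹ := by
    ext lam
    refine and_congr_right fun hlam => ?_
    refine (hA.posSemidef_sub_smul_vecMulVec_iff v hlam.le).trans ?_
    rw [← hcv, inv_eq_one_div, le_div_iff₀ hc, ← RCLike.ofReal_mul, ← RCLike.ofReal_one,
      RCLike.ofReal_le_ofReal]
  exact ⟨c⁻¹, by rw [Complex.ofReal_inv, ← hcv]; rfl, hset ▸ isGreatest_Ioc (inv_pos.2 hc)⟩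
end

section
/- Let A', B' be commuting bounded positive operators on a Hilbert space with A' + B' = I. For each n ≥ 1 define fₙ(t) = n t(1−t)/(n t + (1−t)) on [0,1] (with fₙ(0)=0). Then the operators fₙ(A') = (nA') : B' converge strongly as n → ∞ to s(A')·B', where s(A') is the support projection of A' (the spectral projection χ_{(0,1]}(A')). Equivalently, lim_n (nA' : B') = s(A')(I − A'). -/
/-!
The function `fₙ(t) = (n t) : (1 - t)` takes values in `[0, 1]` and satisfies
`|fₙ(t) t - (1 - t) t| ≤ 1 / n` on `[0, 1] ⊇ σ(A')`, so the operators `fₙ(A')` are contractions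
and `fₙ(A') A' → (1 - A') A'` in norm. Hence `fₙ(A') → S (1 - A')` strongly on `range A'`, where
`S` acts as the identity, and on `ker A'`, where both sides vanish because `fₙ(t)` is divisible
by `t`. For a uniformly bounded sequence of operators the set of vectors along which it converges
is closed, and `closure (range A') ⊕ ker A' = H`.
-/

open Filter Topology Set

noncomputable def parallelSum (a b : ℝ) : ℝ := a * b / (a + b)

lemma parallelSum_nonneg {a b : ℝ} (ha : 0 ≤ a) (hb : 0 ≤ b) : 0 ≤ parallelSum a b :=
  div_nonneg (mul_nonneg ha hb) (add_nonneg ha hb)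

lemma parallelSum_le_right {a b : ℝ} (ha : 0 ≤ a) (hb : 0 ≤ b) : parallelSum a b ≤ b := by
  rcases (add_nonneg ha hb).eq_or_lt with hab | hab
  · simp [parallelSum, ← hab, hb]
  · rw [parallelSum, div_le_iff₀ hab]
    nlinarith

lemma parallelSum_mul_left_eq_div_mul (n t b : ℝ) :
    parallelSum (n * t) b = n * b / (n * t + b) * t := by
  unfold parallelSum; ring

lemma mul_add_one_sub_pos {n t : ℝ} (hn : 0 < n) (ht : t ∈ Icc 0 1) : 0 < n * t + (1 - t) := by
  rcases ht.2.eq_or_lt with rfl | ht1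
  · simpa using hn
  · have := ht.1; positivity

lemma abs_parallelSum_mul_sub_le {n t : ℝ} (hn : 0 < n) (ht : t ∈ Icc 0 1) :
    |parallelSum (n * t) (1 - t) * t - (1 - t) * t| ≤ 1 / n := by
  obtain ⟨h0, h1⟩ := ht
  have hD := mul_add_one_sub_pos hn ⟨h0, h1⟩
  have heq : parallelSum (n * t) (1 - t) * t - (1 - t) * t
      = -(t * (1 - t) ^ 2 / (n * t + (1 - t))) := by
    unfold parallelSum; field_simp; ring
  rw [heq, abs_neg, abs_of_nonneg (by positivity), div_le_div_iff₀ hD hn]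
  nlinarith [mul_nonneg (mul_nonneg hn.le h0) (mul_nonneg h0 (show 0 ≤ 2 - t by linarith))]

section CStarAlgebra

variable {A : Type*} [CStarAlgebra A] [PartialOrder A] [StarOrderedRing A]

lemma spectrum_subset_Icc_of_nonneg_of_le_one {a : A} (h0 : 0 ≤ a) (h1 : a ≤ 1) :
    spectrum ℝ a ⊆ Icc 0 1 := by
  have h1' : ∀ t ∈ spectrum ℝ a, t ≤ 1 :=
    (le_algebraMap_iff_spectrum_le (r := (1 : ℝ))).mp (by simpa using h1)
  exact fun t ht => ⟨spectrum_nonneg_of_nonneg h0 ht, h1' t ht⟩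

variable {a : A} {n : ℝ}

lemma norm_cfc_parallelSum_le_one (hn : 0 < n) (h0 : 0 ≤ a) (h1 : a ≤ 1) :
    ‖cfc (fun t => parallelSum (n * t) (1 - t)) a‖ ≤ 1 := by
  refine norm_cfc_le zero_le_one fun t ht => ?_
  obtain ⟨ht0, ht1⟩ := spectrum_subset_Icc_of_nonneg_of_le_one h0 h1 ht
  have hnt : 0 ≤ n * t := mul_nonneg hn.le ht0
  rw [Real.norm_of_nonneg (parallelSum_nonneg hnt (sub_nonneg.2 ht1))]
  linarith [parallelSum_le_right hnt (sub_nonneg.2 ht1)]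

lemma continuousOn_mul_one_sub_div (hn : 0 < n) (h0 : 0 ≤ a) (h1 : a ≤ 1) :
    ContinuousOn (fun t => n * (1 - t) / (n * t + (1 - t))) (spectrum ℝ a) :=
  ContinuousOn.div (by fun_prop) (by fun_prop) fun t ht =>
    (mul_add_one_sub_pos hn (spectrum_subset_Icc_of_nonneg_of_le_one h0 h1 ht)).ne'

lemma continuousOn_parallelSum (hn : 0 < n) (h0 : 0 ≤ a) (h1 : a ≤ 1) :
    ContinuousOn (fun t => parallelSum (n * t) (1 - t)) (spectrum ℝ a) := by
  simp_rw [parallelSum_mul_left_eq_div_mul]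
  exact (continuousOn_mul_one_sub_div hn h0 h1).mul continuousOn_id

lemma cfc_parallelSum_eq_mul (hn : 0 < n) (h0 : 0 ≤ a) (h1 : a ≤ 1) :
    cfc (fun t => parallelSum (n * t) (1 - t)) a
      = cfc (fun t => n * (1 - t) / (n * t + (1 - t))) a * a := by
  simp_rw [parallelSum_mul_left_eq_div_mul]
  rw [cfc_mul _ _ a (continuousOn_mul_one_sub_div hn h0 h1), cfc_id' ℝ a]

lemma norm_cfc_parallelSum_mul_sub_le (hn : 0 < n) (h0 : 0 ≤ a) (h1 : a ≤ 1) :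
    ‖cfc (fun t => parallelSum (n * t) (1 - t)) a * a - (1 - a) * a‖ ≤ 1 / n := by
  have key : cfc (fun t => parallelSum (n * t) (1 - t)) a * a - (1 - a) * a
      = cfc (fun t => parallelSum (n * t) (1 - t) * t - (1 - t) * t) a := by
    have hf := continuousOn_parallelSum hn h0 h1
    rw [cfc_sub (fun t => parallelSum (n * t) (1 - t) * t) (fun t => (1 - t) * t) a
        (hf.mul continuousOn_id), cfc_mul _ _ a hf, cfc_id' ℝ a, cfc_mul (fun t : ℝ => 1 - t) (fun t : ℝ => t) a,
      cfc_sub (fun _ : ℝ => 1) (fun t : ℝ => t) a, cfc_const_one ℝ a, cfc_id' ℝ a]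
  rw [key]
  exact norm_cfc_le (by positivity) fun t ht => by
    simpa only [Real.norm_eq_abs] using
      abs_parallelSum_mul_sub_le hn (spectrum_subset_Icc_of_nonneg_of_le_one h0 h1 ht)

lemma tendsto_cfc_parallelSum_mul (h0 : 0 ≤ a) (h1 : a ≤ 1) :
    Tendsto (fun k : ℕ => cfc (fun t => parallelSum ((k + 1 : ℝ) * t) (1 - t)) a * a) atTop
      (𝓝 ((1 - a) * a)) :=
  tendsto_iff_norm_sub_tendsto_zero.mpr <|
    squeeze_zero (fun _ => norm_nonneg _)
      (fun k => norm_cfc_parallelSum_mul_sub_le k.cast_add_one_pos h0 h1)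
      tendsto_one_div_add_atTop_nhds_zero_nat

end CStarAlgebra

section HilbertSpace

variable {𝕜 H E ι : Type*} [RCLike 𝕜] [NormedAddCommGroup H] [InnerProductSpace 𝕜 H]
  [CompleteSpace H] [NormedAddCommGroup E] [NormedSpace 𝕜 E]

lemma tendsto_apply_of_tendsto_on_range_of_tendsto_on_ker {T : H →L[𝕜] H} (hT : IsStarNormal T)
    {F : ι → H →L[𝕜] E} {l : Filter ι} {C : ℝ} (hF : ∀ i, ‖F i‖ ≤ C) (L : H →L[𝕜] E)
    (hrange : ∀ y, Tendsto (fun i => F i (T y)) l (𝓝 (L (T y))))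
    (hker : ∀ x, T x = 0 → Tendsto (fun i => F i x) l (𝓝 (L x))) (x : H) :
    Tendsto (fun i => F i x) l (𝓝 (L x)) := by
  have hequi : Equicontinuous fun i => (F i : H → E) :=
    ((NormedSpace.equicontinuous_TFAE F).out 1 5).mpr (by exact ⟨C, hF⟩)
  have hclosed := hequi.isClosed_setOfPred_tendsto (l := l) L.continuous
  obtain ⟨y, hy, z, hz, rfl⟩ := T.range.topologicalClosure.exists_add_mem_mem_orthogonal x
  have hy' : y ∈ {x | Tendsto (fun i => F i x) l (𝓝 (L x))} := by
    rw [← SetLike.mem_coe, Submodule.topologicalClosure_coe] at hy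
    refine closure_minimal ?_ hclosed hy
    rintro _ ⟨y, rfl⟩
    exact hrange y
  rw [Submodule.orthogonal_closure, ContinuousLinearMap.IsStarNormal.orthogonal_range hT] at hz
  simpa only [map_add] using hy'.add (hker z hz)

lemma IsStarProjection.mul_eq_self_of_ker_le {S T : H →L[𝕜] H} (hS : IsStarProjection S)
    (hT : IsSelfAdjoint T) (hker : S.ker ≤ T.ker) : S * T = T := by
  have hT1S : T * (1 - S) = 0 := by
    ext x
    have hx : S (x - S x) = 0 := by
      rw [map_sub, ← mul_apply_eq_comp, hS.isIdempotentElem.eq, sub_self]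
    simpa using hker hx
  have := congrArg star hT1S
  rwa [star_mul, hT.star_eq, star_sub, star_one, hS.isSelfAdjoint.star_eq, star_zero, sub_mul,
    one_mul, sub_eq_zero, eq_comm] at this

end HilbertSpace

lemma cfc_parallelSum_apply_eq_zero {H : Type*} [NormedAddCommGroup H]
    [InnerProductSpace ℂ H] [CompleteSpace H] {T : H →L[ℂ] H} {n : ℝ} (hn : 0 < n) (h0 : 0 ≤ T)
    (h1 : T ≤ 1) {x : H} (hx : T x = 0) : cfc (fun t => parallelSum (n * t) (1 - t)) T x = 0 := by
  rw [cfc_parallelSum_eq_mul hn h0 h1, mul_apply_eq_comp, hx, map_zero]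

theorem parallel_sum_limit_support_projection_general {H : Type*} [NormedAddCommGroup H]
    [InnerProductSpace ℂ H] [CompleteSpace H]
    (A' B' S : H →L[ℂ] H) (hA : A'.IsPositive) (hB : B'.IsPositive)
    (hsum : A' + B' = 1)
    (hSsa : IsSelfAdjoint S) (hSidem : IsIdempotentElem S)
    (hSker : LinearMap.ker (S : H →ₗ[ℂ] H) = LinearMap.ker (A' : H →ₗ[ℂ] H)) :
    S * B' = S * (1 - A') ∧
      ∀ ξ : H, Tendsto (fun k : ℕ =>
          (cfc (fun t : ℝ => ((k + 1 : ℝ) * t * (1 - t)) / ((k + 1 : ℝ) * t + (1 - t))) A') ξ)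
        atTop (𝓝 ((S * B') ξ)) := by
  obtain rfl : B' = 1 - A' := eq_sub_of_add_eq' hsum
  have h0 : 0 ≤ A' := (ContinuousLinearMap.nonneg_iff_isPositive A').mpr hA
  have h1 : A' ≤ 1 := hB
  have hSA : S * A' = A' :=
    IsStarProjection.mul_eq_self_of_ker_le ⟨hSidem, hSsa⟩ hA.isSelfAdjoint hSker.le
  refine ⟨rfl, tendsto_apply_of_tendsto_on_range_of_tendsto_on_ker hA.isSelfAdjoint.isStarNormal
    (fun k => norm_cfc_parallelSum_le_one k.cast_add_one_pos h0 h1) _ (fun y => ?_) (fun x hx => ?_)⟩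
  · have hSBA : S * (1 - A') * A' = (1 - A') * A' := by
      rw [mul_assoc, ((Commute.one_left A').sub_left (Commute.refl A')).eq, ← mul_assoc, hSA]
    rw [← mul_apply_eq_comp (S * (1 - A')), hSBA]
    exact ((continuous_eval_const y).tendsto _).comp (tendsto_cfc_parallelSum_mul h0 h1)
  · have hSx : S x = 0 := hSker.ge hx
    have hSBx : (S * (1 - A')) x = 0 := by
      simp [mul_apply_eq_comp, hx, hSx]
    rw [hSBx]
    exact tendsto_const_nhds.congr fun k =>
      (cfc_parallelSum_apply_eq_zero k.cast_add_one_pos h0 h1 hx).symm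

/-- let `A', B'` be commuting bounded positive operators with `A' + B' = I`,
and for `n ≥ 1` let `fₙ(t) = n t(1−t)/(n t + (1−t))`, so that `fₙ(A') = (nA') : B'` is the
parallel sum. Then `fₙ(A')` converges strongly to `s(A')·B' = s(A')(I − A')`, where
`s(A')` is the support projection of `A'` (the orthogonal projection with kernel
`ker A'`, i.e. the spectral projection `χ_{(0,1]}(A')`). -/
theorem parallel_sum_limit_support_projection {H : Type*} [NormedAddCommGroup H]
    [InnerProductSpace ℂ H] [CompleteSpace H]
    (A' B' S : H →L[ℂ] H) (hA : A'.IsPositive) (hB : B'.IsPositive)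
    (hcomm : A' * B' = B' * A') (hsum : A' + B' = 1)
    (hSsa : IsSelfAdjoint S) (hSidem : IsIdempotentElem S)
    (hSker : LinearMap.ker (S : H →ₗ[ℂ] H) = LinearMap.ker (A' : H →ₗ[ℂ] H)) :
    S * B' = S * (1 - A') ∧
      ∀ ξ : H, Tendsto (fun k : ℕ =>
          (cfc (fun t : ℝ => ((k + 1 : ℝ) * t * (1 - t)) / ((k + 1 : ℝ) * t + (1 - t))) A') ξ)
        atTop (𝓝 ((S * B') ξ)) :=
  parallel_sum_limit_support_projection_general A' B' S hA hB hsum hSsa hSidem hSker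
end
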